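/- The pair of sequences $\alpha_n = q^{n^2+n/2}(1+q^{n+1/2})/(1+q^{1/2})$ and $\beta_n = 1/((q;q)_n (q^{3/2};q)_n)$ forms a Bailey pair relative to $a = q$; that is, $\beta_n = \sum_{r=0}^{n} \alpha_r/((q;q)_{n-r}(q^2;q)_{n+r})$ for all $n \ge 0$. -/

import Mathlib

open PowerSeries

/-- The q-Pochhammer symbol `(q^a; q^b)_m = ∏_{t<m} (1 - q^{a+bt})`. -/
noncomputable def poch (a b m : ℕ) : PowerSeries ℚ :=
  ∏ t ∈ Finset.range m, (1 - (X : PowerSeries ℚ) ^ (a + b * t))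

/-- `α_n = q^{n²+n/2}(1+q^{n+1/2})/(1+q^{1/2})` of Slater's Bailey pair F(2),
written after the dilation `q ↦ q²` so that all powers are integral. -/
noncomputable def alphaF2 (n : ℕ) : PowerSeries ℚ :=
  (X : PowerSeries ℚ) ^ (2*n^2 + n) * (1 + (X : PowerSeries ℚ) ^ (2*n + 1)) *
    (1 + (X : PowerSeries ℚ))⁻¹

local notation "Q" => PowerSeries ℚ

lemma poch_succ (a b m : ℕ) : poch a b (m+1) = poch a b m * (1 - (X : Q) ^ (a + b * m)) :=
  Finset.prod_range_succ _ _

lemma poch_zero (a b : ℕ) : poch a b 0 = 1 := rfl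

lemma constantCoeff_poch (a b m : ℕ) (ha : 1 ≤ a) :
    constantCoeff (poch a b m) = 1 := by
  induction m with
  | zero => simp [poch_zero]
  | succ m ih =>
    rw [poch_succ, map_mul, ih, map_sub, map_one, map_pow, constantCoeff_X,
      zero_pow (by omega : a + b * m ≠ 0), sub_zero, one_mul]

lemma poch_ne_zero (a b m : ℕ) (ha : 1 ≤ a) : poch a b m ≠ 0 := fun h => by
  have := constantCoeff_poch a b m ha
  rw [h, map_zero] at this; exact zero_ne_one this

/-- Gaussian binomial coefficient with base `X^2`. -/
noncomputable def gb : ℕ → ℕ → Q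
  | 0, 0 => 1
  | 0, _+1 => 0
  | _+1, 0 => 1
  | m+1, i+1 => gb m i + (X : Q) ^ (2*(i+1)) * gb m (i+1)

lemma gb_zero_right (m : ℕ) : gb m 0 = 1 := by cases m <;> rfl

lemma gb_eq_zero : ∀ m i, m < i → gb m i = 0 := by
  intro m
  induction m with
  | zero => intro i hi; match i, hi with | (j+1), _ => rfl
  | succ m ih =>
    intro i hi
    match i, hi with
    | (j+1), hi =>
      show gb m j + (X : Q) ^ (2*(j+1)) * gb m (j+1) = 0
      rw [ih j (by omega), ih (j+1) (by omega), mul_zero, add_zero]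

lemma gb_self (m : ℕ) : gb m m = 1 := by
  induction m with
  | zero => rfl
  | succ m ih =>
    show gb m m + (X : Q) ^ (2*(m+1)) * gb m (m+1) = 1
    rw [ih, gb_eq_zero m (m+1) (by omega), mul_zero, add_zero]

/-- key product formula -/
lemma gb_mul_poch : ∀ m i, i ≤ m → gb m i * (poch 2 2 i * poch 2 2 (m - i)) = poch 2 2 m := by
  intro m
  induction m with
  | zero => intro i hi; interval_cases i; simp [gb, poch_zero]
  | succ m ih =>
    intro i hi
    match i with
    | 0 => rw [gb_zero_right, Nat.sub_zero, poch_zero, one_mul, one_mul]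
    | (i+1) =>
      show (gb m i + (X : Q) ^ (2*(i+1)) * gb m (i+1)) * _ = _
      have h1 : poch 2 2 (i+1) = poch 2 2 i * (1 - (X:Q)^(2+2*i)) := poch_succ 2 2 i
      rcases Nat.lt_or_ge (i+1) (m+1) with hlt | hge
      · -- i + 1 ≤ m
        have hi1 : i + 1 ≤ m := by omega
        have hsub : m + 1 - (i+1) = (m - (i+1)) + 1 := by omega
        have hsub2 : m - i = (m - (i+1)) + 1 := by omega
        have h2 : poch 2 2 (m+1-(i+1)) = poch 2 2 (m - (i+1)) * (1 - (X:Q)^(2+2*(m-(i+1)))) := by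
          rw [hsub]; exact poch_succ 2 2 _
        have e1 := ih i (by omega)
        have e2 := ih (i+1) hi1
        have hsub0 : m + 1 - (i + 1) = m - i := by omega
        have t1 : gb m i * (poch 2 2 (i + 1) * poch 2 2 (m + 1 - (i + 1)))
            = poch 2 2 m * (1 - (X:Q)^(2+2*i)) := by
          rw [hsub0, h1]
          calc gb m i * (poch 2 2 i * (1 - (X:Q)^(2+2*i)) * poch 2 2 (m - i))
              = gb m i * (poch 2 2 i * poch 2 2 (m - i)) * (1 - (X:Q)^(2+2*i)) := by ring
            _ = _ := by rw [e1]
        have t2 : (X : Q) ^ (2*(i+1)) * gb m (i+1) * (poch 2 2 (i + 1) * poch 2 2 (m + 1 - (i + 1)))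
            = poch 2 2 m * ((X:Q)^(2*(i+1)) * (1 - (X:Q)^(2+2*(m-(i+1))))) := by
          rw [h2]
          calc (X : Q) ^ (2*(i+1)) * gb m (i+1) *
                (poch 2 2 (i+1) * (poch 2 2 (m-(i+1)) * (1 - (X:Q)^(2+2*(m-(i+1))))))
              = gb m (i+1) * (poch 2 2 (i+1) * poch 2 2 (m-(i+1))) *
                  ((X:Q)^(2*(i+1)) * (1 - (X:Q)^(2+2*(m-(i+1))))) := by ring
            _ = _ := by rw [e2]
        have hX : (X:Q)^(2*(i+1)) * (X:Q)^(2+2*(m-(i+1))) = (X:Q)^(2+2*m) := by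
          rw [← pow_add]; congr 1; omega
        have key : (1 - (X:Q)^(2+2*i)) +
            (X:Q)^(2*(i+1)) * (1 - (X:Q)^(2+2*(m-(i+1)))) = 1 - (X:Q)^(2+2*m) := by
          linear_combination -hX
        linear_combination t1 + t2 + poch 2 2 m * key - poch_succ 2 2 m
      · -- i + 1 = m + 1
        have : i = m := by omega
        subst this
        rw [gb_eq_zero i (i+1) (by omega), mul_zero, add_zero, gb_self, one_mul,
          Nat.sub_self, poch_zero, mul_one]

lemma gb_symm (m i : ℕ) (hi : i ≤ m) : gb m (m - i) = gb m i := by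
  have h1 := gb_mul_poch m i hi
  have h2 := gb_mul_poch m (m-i) (by omega)
  have hsub : m - (m - i) = i := by omega
  rw [hsub] at h2
  have hne : poch 2 2 (m-i) * poch 2 2 i ≠ 0 :=
    mul_ne_zero (poch_ne_zero _ _ _ (by omega)) (poch_ne_zero _ _ _ (by omega))
  apply mul_right_cancel₀ hne
  rw [mul_comm (poch 2 2 (m-i)), h2, mul_comm (poch 2 2 i) (poch 2 2 (m-i))] at *
  rw [h1, h2]

/-- Second Pascal recurrence. -/
lemma gb_pascal' (m i : ℕ) (hi : i ≤ m) :
    gb (m+1) (i+1) = (X : Q) ^ (2*(m-i)) * gb m i + gb m (i+1) := by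
  have hne : poch 2 2 (i+1) * poch 2 2 (m - i) ≠ 0 :=
    mul_ne_zero (poch_ne_zero _ _ _ (by omega)) (poch_ne_zero _ _ _ (by omega))
  apply mul_right_cancel₀ hne
  have hsub : m + 1 - (i+1) = m - i := by omega
  have e0 := gb_mul_poch (m+1) (i+1) (by omega)
  rw [hsub] at e0
  have e1 := gb_mul_poch m i hi
  rcases Nat.lt_or_ge (i+1) (m+1) with hlt | hge
  · have e2 := gb_mul_poch m (i+1) (by omega)
    have hsub2 : m - i = (m - (i+1)) + 1 := by omega
    have t1 : (X : Q) ^ (2*(m-i)) * gb m i * (poch 2 2 (i+1) * poch 2 2 (m-i))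
        = poch 2 2 m * ((X:Q)^(2*(m-i)) * (1 - (X:Q)^(2+2*i))) := by
      rw [poch_succ 2 2 i]
      calc (X : Q) ^ (2*(m-i)) * gb m i * (poch 2 2 i * (1 - (X:Q)^(2+2*i)) * poch 2 2 (m-i))
          = gb m i * (poch 2 2 i * poch 2 2 (m-i)) * ((X:Q)^(2*(m-i)) * (1 - (X:Q)^(2+2*i))) := by
            ring
        _ = _ := by rw [e1]
    have t2 : gb m (i+1) * (poch 2 2 (i+1) * poch 2 2 (m-i))
        = poch 2 2 m * (1 - (X:Q)^(2+2*(m-(i+1)))) := by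
      rw [hsub2, poch_succ 2 2 (m-(i+1))]
      calc gb m (i+1) * (poch 2 2 (i+1) * (poch 2 2 (m-(i+1)) * (1 - (X:Q)^(2+2*(m-(i+1))))))
          = gb m (i+1) * (poch 2 2 (i+1) * poch 2 2 (m-(i+1))) * (1 - (X:Q)^(2+2*(m-(i+1)))) := by
            ring
        _ = _ := by rw [e2]
    have hX : (X:Q)^(2*(m-i)) * (X:Q)^(2+2*i) = (X:Q)^(2+2*m) := by
      rw [← pow_add]; congr 1; omega
    have h2 : 2+2*(m-(i+1)) = 2*(m-i) := by omega
    have key : (X:Q)^(2*(m-i)) * (1 - (X:Q)^(2+2*i)) + (1 - (X:Q)^(2+2*(m-(i+1))))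
        = 1 - (X:Q)^(2+2*m) := by
      rw [h2]; linear_combination -hX
    linear_combination e0 - t1 - t2 - poch 2 2 m * key + poch_succ 2 2 m
  · have : i = m := by omega
    subst this
    simp [gb_eq_zero i (i+1) (by omega), gb_self, Nat.sub_self]

lemma gb_succ_succ (m i : ℕ) : gb (m+1) (i+1) = gb m i + (X : Q) ^ (2*(i+1)) * gb m (i+1) := rfl

-- exponents
def gi (j : ℤ) : ℕ := (2*j^2 + j).toNat
def gi' (j : ℤ) : ℕ := (2*j^2 - j).toNat
def gi'' (j : ℤ) : ℕ := (2*j^2 + 3*j + 1).toNat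

lemma gi_nonneg (j : ℤ) : (0:ℤ) ≤ 2*j^2 + j := by
  rcases le_or_gt 0 j with h | h
  · nlinarith
  · nlinarith
lemma gi'_nonneg (j : ℤ) : (0:ℤ) ≤ 2*j^2 - j := by
  rcases le_or_gt 0 j with h | h
  · nlinarith
  · nlinarith
lemma gi''_nonneg (j : ℤ) : (0:ℤ) ≤ 2*j^2 + 3*j + 1 := by
  rcases le_or_gt 0 j with h | h
  · nlinarith
  · have h1 : j + 1 ≤ 0 := by omega
    have h2 : 2*j + 1 ≤ 0 := by omega
    nlinarith

lemma gi_neg (j : ℤ) : gi (-j) = gi' j := by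
  unfold gi gi'; congr 1; ring

lemma gi''_neg (j : ℤ) : gi (-(j+1)) = gi'' j := by
  unfold gi gi''; congr 1; ring

/-- products of all `(1+X^k)` -/
noncomputable def Np (m : ℕ) : Q := ∏ k ∈ Finset.range m, (1 + (X:Q)^(k+1))

noncomputable def Se (n : ℕ) : Q :=
  ∑ i ∈ Finset.range (2*n+1), gb (2*n) i * X ^ gi ((n:ℤ) - i)
noncomputable def So (n : ℕ) : Q :=
  ∑ i ∈ Finset.range (2*n+2), gb (2*n+1) i * X ^ gi ((n:ℤ) - i)

lemma U_eq (n : ℕ) :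
    (∑ i ∈ Finset.range (2*n+1), gb (2*n) i * X ^ gi' ((n:ℤ) - i)) = Se n := by
  rw [Se, ← Finset.sum_range_reflect (fun i => gb (2*n) i * X ^ gi ((n:ℤ) - i)) (2*n+1)]
  apply Finset.sum_congr rfl
  intro i hi
  simp only [Finset.mem_range] at hi
  have h1 : 2*n+1-1-i = 2*n - i := by omega
  rw [h1, gb_symm (2*n) i (by omega)]
  congr 1
  have hc : ((2*n - i : ℕ) : ℤ) = 2*(n:ℤ) - i := by
    rw [Nat.cast_sub (by omega : i ≤ 2*n)]; push_cast; ring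
  rw [hc, show (n:ℤ) - (2*(n:ℤ) - i) = -((n:ℤ) - i) by ring, gi_neg]

lemma T_eq (n : ℕ) :
    (∑ i ∈ Finset.range (2*n+2), gb (2*n+1) i * X ^ gi'' ((n:ℤ) - i)) = So n := by
  rw [So, ← Finset.sum_range_reflect (fun i => gb (2*n+1) i * X ^ gi ((n:ℤ) - i)) (2*n+2)]
  apply Finset.sum_congr rfl
  intro i hi
  simp only [Finset.mem_range] at hi
  have h1 : 2*n+2-1-i = 2*n+1 - i := by omega
  rw [h1, gb_symm (2*n+1) i (by omega)]
  congr 1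
  have hc : ((2*n+1 - i : ℕ) : ℤ) = 2*(n:ℤ)+1 - i := by
    rw [Nat.cast_sub (by omega : i ≤ 2*n+1)]; push_cast; ring
  rw [hc, show (n:ℤ) - (2*(n:ℤ)+1 - i) = -(((n:ℤ) - i)+1) by ring, gi''_neg]

lemma exp1 (n i : ℕ) (h : i ≤ 2*n) :
    2*(2*n-i) + gi ((n:ℤ) - i - 1) = (2*n+1) + gi' ((n:ℤ) - i) := by
  unfold gi gi'
  have h1 := gi_nonneg ((n:ℤ) - i - 1)
  have h2 := gi'_nonneg ((n:ℤ) - i)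
  have h3 : (2*((n:ℤ) - i - 1)^2 + ((n:ℤ) - i - 1)) + 2*(n:ℤ) + 2*((n:ℤ) - i)
      = (2*((n:ℤ) - i)^2 - ((n:ℤ) - i)) + 2*(n:ℤ) + 1 := by ring
  generalize (2*((n:ℤ) - i - 1)^2 + ((n:ℤ) - i - 1)) = x at h1 h3
  generalize (2*((n:ℤ) - i)^2 - ((n:ℤ) - i)) = y at h2 h3
  omega

lemma exp2 (n i : ℕ) :
    2*(i+1) + gi ((n:ℤ) - i) = (2*n+2) + gi'' ((n:ℤ) - i - 1) := by
  unfold gi gi''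
  have h1 := gi_nonneg ((n:ℤ) - i)
  have h2 := gi''_nonneg ((n:ℤ) - i - 1)
  have h3 : (2*((n:ℤ) - i)^2 + ((n:ℤ) - i)) + 2*(i:ℤ) + 2
      = (2*((n:ℤ) - i - 1)^2 + 3*((n:ℤ) - i - 1) + 1) + 2*(n:ℤ) + 2 := by ring
  generalize (2*((n:ℤ) - i)^2 + ((n:ℤ) - i)) = x at h1 h3
  generalize (2*((n:ℤ) - i - 1)^2 + 3*((n:ℤ) - i - 1) + 1) = y at h2 h3
  omega

lemma odd_step (n : ℕ) : So n = (1 + (X:Q)^(2*n+1)) * Se n := by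
  rw [So, Finset.sum_range_succ' (fun i => gb (2*n+1) i * X ^ gi ((n:ℤ) - i)) (2*n+1)]
  have split : ∀ i ∈ Finset.range (2*n+1),
      gb (2*n+1) (i+1) * (X:Q) ^ gi ((n:ℤ) - ↑(i+1))
      = (X:Q)^(2*n+1) * (gb (2*n) i * X ^ gi' ((n:ℤ) - i))
        + gb (2*n) (i+1) * X ^ gi ((n:ℤ) - ↑(i+1)) := by
    intro i hi
    simp only [Finset.mem_range] at hi
    have harg : (n:ℤ) - ↑(i+1) = (n:ℤ) - i - 1 := by push_cast; ring
    rw [harg, gb_pascal' (2*n) i (by omega), add_mul]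
    congr 1
    have he : 2*(2*n-i) + gi ((n:ℤ) - i - 1) = (2*n+1) + gi' ((n:ℤ) - i) :=
      exp1 n i (by omega)
    calc (X:Q)^(2*(2*n-i)) * gb (2*n) i * (X:Q) ^ gi ((n:ℤ) - i - 1)
        = gb (2*n) i * (X:Q) ^ (2*(2*n-i) + gi ((n:ℤ) - i - 1)) := by
          rw [pow_add]; ring
      _ = gb (2*n) i * (X:Q) ^ ((2*n+1) + gi' ((n:ℤ) - i)) := by rw [he]
      _ = (X:Q)^(2*n+1) * (gb (2*n) i * X ^ gi' ((n:ℤ) - i)) := by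
          rw [pow_add]; ring
  rw [Finset.sum_congr rfl split, Finset.sum_add_distrib, ← Finset.mul_sum, U_eq]
  have hlast : ∑ i ∈ Finset.range (2*n+1), gb (2*n) (i+1) * (X:Q) ^ gi ((n:ℤ) - ↑(i+1))
      + gb (2*n+1) 0 * (X:Q) ^ gi ((n:ℤ) - ↑(0:ℕ)) = Se n := by
    rw [gb_zero_right, ← gb_zero_right (2*n),
      ← Finset.sum_range_succ' (fun i => gb (2*n) i * X ^ gi ((n:ℤ) - i)) (2*n+1)]
    rw [Finset.sum_range_succ, gb_eq_zero (2*n) (2*n+1) (by omega), zero_mul, add_zero]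
    rfl
  linear_combination hlast

lemma exp3 (n : ℕ) : gi ((n:ℤ)+1) = (2*n+2) + gi'' (n:ℤ) := by
  unfold gi gi''
  have h1 := gi_nonneg ((n:ℤ)+1)
  have h2 := gi''_nonneg (n:ℤ)
  have h3 : (2*((n:ℤ)+1)^2 + ((n:ℤ)+1)) = (2*(n:ℤ)^2 + 3*(n:ℤ) + 1) + 2*(n:ℤ) + 2 := by ring
  generalize (2*((n:ℤ)+1)^2 + ((n:ℤ)+1)) = x at h1 h3
  generalize (2*(n:ℤ)^2 + 3*(n:ℤ) + 1) = y at h2 h3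
  omega

lemma even_step (n : ℕ) : Se (n+1) = (1 + (X:Q)^(2*n+2)) * So n := by
  have hse : Se (n+1) = ∑ i ∈ Finset.range (2*n+3), gb (2*n+2) i * X ^ gi ((n:ℤ)+1 - i) := by
    rw [Se, show ((n+1:ℕ):ℤ) = (n:ℤ)+1 from by push_cast; ring,
      show 2*(n+1) = 2*n+2 from by ring, show 2*n+2+1 = 2*n+3 from by omega]
  rw [hse, Finset.sum_range_succ' (fun i => gb (2*n+2) i * X ^ gi ((n:ℤ)+1 - i)) (2*n+2)]
  have split : ∀ i ∈ Finset.range (2*n+2),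
      gb (2*n+2) (i+1) * (X:Q) ^ gi ((n:ℤ)+1 - ↑(i+1))
      = gb (2*n+1) i * X ^ gi ((n:ℤ) - i)
        + (X:Q)^(2*n+2) * (gb (2*n+1) (i+1) * X ^ gi'' ((n:ℤ) - ↑(i+1))) := by
    intro i hi
    have harg : (n:ℤ)+1 - ↑(i+1) = (n:ℤ) - i := by push_cast; ring
    have harg2 : (n:ℤ) - ↑(i+1) = (n:ℤ) - i - 1 := by push_cast; ring
    rw [harg, harg2, gb_succ_succ (2*n+1) i, add_mul]
    congr 1
    have he := exp2 n i
    calc (X:Q)^(2*(i+1)) * gb (2*n+1) (i+1) * (X:Q) ^ gi ((n:ℤ) - i)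
        = gb (2*n+1) (i+1) * (X:Q) ^ (2*(i+1) + gi ((n:ℤ) - i)) := by
          rw [pow_add]; ring
      _ = gb (2*n+1) (i+1) * (X:Q) ^ ((2*n+2) + gi'' ((n:ℤ) - i - 1)) := by rw [he]
      _ = (X:Q)^(2*n+2) * (gb (2*n+1) (i+1) * X ^ gi'' ((n:ℤ) - i - 1)) := by
          rw [pow_add]; ring
  rw [Finset.sum_congr rfl split, Finset.sum_add_distrib, ← Finset.mul_sum]
  have hf0 : gb (2*n+1) 0 * (X:Q) ^ gi'' ((n:ℤ) - ((0:ℕ):ℤ)) = (X:Q) ^ gi'' (n:ℤ) := by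
    rw [gb_zero_right, one_mul]; norm_num
  have hshift : ∑ i ∈ Finset.range (2*n+2), gb (2*n+1) (i+1) * (X:Q) ^ gi'' ((n:ℤ) - ↑(i+1))
      = So n - (X:Q) ^ gi'' (n:ℤ) := by
    have h1 := Finset.sum_range_succ' (fun i => gb (2*n+1) i * X ^ gi'' ((n:ℤ) - i)) (2*n+2)
    have h2 := Finset.sum_range_succ (fun i => gb (2*n+1) i * X ^ gi'' ((n:ℤ) - i)) (2*n+2)
    rw [gb_eq_zero (2*n+1) (2*n+2) (by omega), zero_mul, add_zero, T_eq] at h2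
    rw [h2, hf0] at h1
    linear_combination -h1
  rw [hshift]
  have hlastexp : (X:Q) ^ gi ((n:ℤ)+1 - ((0:ℕ):ℤ)) = (X:Q)^(2*n+2) * (X:Q) ^ gi'' (n:ℤ) := by
    rw [← pow_add, ← exp3]; norm_num
  have hso : (∑ i ∈ Finset.range (2*n+2), gb (2*n+1) i * (X:Q) ^ gi ((n:ℤ) - i)) = So n := rfl
  rw [gb_zero_right, one_mul, hlastexp, hso]
  ring

lemma Np_succ (m : ℕ) : Np (m+1) = Np m * (1 + (X:Q)^(m+1)) := Finset.prod_range_succ _ _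

lemma main_pair : ∀ n : ℕ, Se n = Np (2*n) ∧ So n = Np (2*n+1) := by
  intro n
  induction n with
  | zero =>
    constructor
    · show Se 0 = Np 0
      rw [Se, Np]
      simp [gb_zero_right, gi]
    · have h := odd_step 0
      have hse : Se 0 = 1 := by rw [Se]; simp [gb_zero_right, gi]
      rw [h, hse, mul_one, Np_succ, Np]
      simp
  | succ n ih =>
    have h1 : Se (n+1) = Np (2*(n+1)) := by
      rw [even_step, ih.2]
      rw [show 2*(n+1) = (2*n+1)+1 from by omega, Np_succ (2*n+1),
        show 2*n+1+1 = 2*n+2 from by omega]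
      ring
    refine ⟨h1, ?_⟩
    rw [odd_step, h1, Np_succ (2*(n+1))]
    ring

lemma main_sum (n : ℕ) :
    (∑ i ∈ Finset.range (2*n+2), gb (2*n+1) i * (X:Q) ^ gi ((n:ℤ) - i)) = Np (2*n+1) :=
  (main_pair n).2

lemma constantCoeff_Np (m : ℕ) : constantCoeff (Np m) = 1 := by
  rw [Np, map_prod]
  apply Finset.prod_eq_one
  intro k _
  rw [map_add, map_one, map_pow, constantCoeff_X, zero_pow (by omega : k+1 ≠ 0), add_zero]

lemma Np_ne_zero (m : ℕ) : Np m ≠ 0 := fun h => by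
  have := constantCoeff_Np m; rw [h, map_zero] at this; exact zero_ne_one this

lemma gi_natCast (r : ℕ) : gi (r:ℤ) = 2*r^2 + r := by
  unfold gi
  rw [show (2*(r:ℤ)^2 + r) = ((2*r^2+r : ℕ):ℤ) from by push_cast; ring, Int.toNat_natCast]

lemma gi_negsucc (r : ℕ) : gi (-((r:ℤ)+1)) = 2*r^2+3*r+1 := by
  unfold gi
  rw [show (2*(-((r:ℤ)+1))^2 + -((r:ℤ)+1)) = ((2*r^2+3*r+1 : ℕ):ℤ) from by push_cast; ring,
    Int.toNat_natCast]

lemma alpha_mul (r : ℕ) :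
    alphaF2 r * (1+X) = (X:Q)^(2*r^2+r) + (X:Q)^(2*r^2+3*r+1) := by
  have hinv : ((1+X:Q))⁻¹ * (1+X) = 1 := by
    apply PowerSeries.inv_mul_cancel
    rw [map_add, map_one, constantCoeff_X, add_zero]; norm_num
  have h2 : (X:Q)^(2*r^2+r) * (X:Q)^(2*r+1) = (X:Q)^(2*r^2+3*r+1) := by
    rw [← pow_add]; congr 1; omega
  rw [alphaF2]
  linear_combination ((X:Q)^(2*r^2+r) * (1+(X:Q)^(2*r+1))) * hinv + h2

lemma A_split (m : ℕ) : poch 2 2 (m+1) = poch 4 2 m * ((1-X)*(1+X)) := by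
  rw [poch, Finset.prod_range_succ']
  have h1 : (∏ t ∈ Finset.range m, (1 - (X:Q) ^ (2 + 2 * (t+1)))) = poch 4 2 m := by
    rw [poch]
    apply Finset.prod_congr rfl
    intro t _
    rw [show 2 + 2*(t+1) = 4 + 2*t from by omega]
  rw [h1]
  have h2 : (1 - (X:Q) ^ (2 + 2*0)) = (1-X)*(1+X) := by norm_num; ring
  rw [h2]

lemma pochAll_odd : ∀ n : ℕ,
    (∏ k ∈ Finset.range (2*n+1), (1 - (X:Q)^(k+1))) = (1-X) * (poch 2 2 n * poch 3 2 n) := by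
  intro n
  induction n with
  | zero => simp [poch_zero]
  | succ n ih =>
    rw [show 2*(n+1)+1 = (2*n+1)+1+1 from by omega, Finset.prod_range_succ,
      Finset.prod_range_succ, ih, poch_succ 2 2 n, poch_succ 3 2 n]
    rw [show 2*n+1+1 = 2+2*n from by omega, show 2+2*n+1 = 3+2*n from by omega]
    ring

lemma poch22_odd (n : ℕ) :
    poch 2 2 (2*n+1) = (1-X) * (poch 2 2 n * poch 3 2 n) * Np (2*n+1) := by
  rw [← pochAll_odd n, Np, ← Finset.prod_mul_distrib, poch]
  apply Finset.prod_congr rfl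
  intro t _
  rw [show 2 + 2*t = (t+1) + (t+1) from by omega, pow_add]
  ring

/-- Slater's Bailey pair F(2) relative to `a = q` (after the dilation `q ↦ q²`):
`β_n = 1/((q;q)_n (q^{3/2};q)_n)` satisfies `β_n = ∑_{r≤n} α_r/((q;q)_{n-r}(q²;q)_{n+r})`. -/
theorem slater_F2_bailey_pair (n : ℕ) :
    (poch 2 2 n * poch 3 2 n)⁻¹
      = ∑ r ∈ Finset.range (n+1), alphaF2 r * (poch 2 2 (n - r) * poch 4 2 (n + r))⁻¹ := by
  have hcc : constantCoeff (poch 2 2 n * poch 3 2 n) ≠ 0 := by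
    rw [map_mul, constantCoeff_poch 2 2 n (by omega), constantCoeff_poch 3 2 n (by omega)]
    norm_num
  rw [PowerSeries.inv_eq_iff_mul_eq_one hcc]
  -- inverse form of gb
  have gbinv : ∀ i, i ≤ 2*n+1 →
      gb (2*n+1) i = poch 2 2 (2*n+1) * (poch 2 2 i * poch 2 2 (2*n+1-i))⁻¹ := by
    intro i hi
    have h := gb_mul_poch (2*n+1) i hi
    have hu : (poch 2 2 i * poch 2 2 (2*n+1-i)) * (poch 2 2 i * poch 2 2 (2*n+1-i))⁻¹ = 1 := by
      apply PowerSeries.mul_inv_cancel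
      rw [map_mul, constantCoeff_poch 2 2 i (by omega), constantCoeff_poch 2 2 _ (by omega)]
      norm_num
    calc gb (2*n+1) i
        = gb (2*n+1) i * ((poch 2 2 i * poch 2 2 (2*n+1-i)) * (poch 2 2 i * poch 2 2 (2*n+1-i))⁻¹) := by
          rw [hu, mul_one]
      _ = (gb (2*n+1) i * (poch 2 2 i * poch 2 2 (2*n+1-i))) * (poch 2 2 i * poch 2 2 (2*n+1-i))⁻¹ := by
          ring
      _ = _ := by rw [h]
  have star := main_sum n
  -- split the sum
  have hsplit : (∑ i ∈ Finset.range (2*n+2), gb (2*n+1) i * (X:Q) ^ gi ((n:ℤ) - i))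
      = ∑ r ∈ Finset.range (n+1), (gb (2*n+1) (n-r) * (X:Q) ^ gi ((n:ℤ) - ↑(n-r))
          + gb (2*n+1) (n+1+r) * (X:Q) ^ gi ((n:ℤ) - ↑(n+1+r))) := by
    rw [show 2*n+2 = (n+1)+(n+1) from by omega,
      Finset.sum_range_add (fun i => gb (2*n+1) i * (X:Q) ^ gi ((n:ℤ) - i)) (n+1) (n+1),
      Finset.sum_add_distrib]
    congr 1
    · rw [← Finset.sum_range_reflect (fun i => gb (2*n+1) i * (X:Q) ^ gi ((n:ℤ) - i)) (n+1)]
      apply Finset.sum_congr rfl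
      intro r hr
      rw [show n+1-1-r = n-r from by omega]
  rw [hsplit] at star
  -- per-term evaluation
  have key : ∀ r ∈ Finset.range (n+1),
      gb (2*n+1) (n-r) * (X:Q) ^ gi ((n:ℤ) - ↑(n-r))
        + gb (2*n+1) (n+1+r) * (X:Q) ^ gi ((n:ℤ) - ↑(n+1+r))
      = alphaF2 r * (poch 2 2 (n-r) * poch 4 2 (n+r))⁻¹
          * (poch 2 2 n * poch 3 2 n) * Np (2*n+1) := by
    intro r hr
    simp only [Finset.mem_range] at hr
    have hrn : r ≤ n := by omega
    have e1 : gi ((n:ℤ) - ↑(n-r)) = 2*r^2+r := by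
      rw [Nat.cast_sub hrn, show (n:ℤ) - ((n:ℤ) - r) = (r:ℤ) from by ring, gi_natCast]
    have e2 : gi ((n:ℤ) - ↑(n+1+r)) = 2*r^2+3*r+1 := by
      push_cast
      rw [show (n:ℤ) - ((n:ℤ)+1+r) = -((r:ℤ)+1) from by ring, gi_negsucc]
    have hgb1 : gb (2*n+1) (n-r)
        = poch 2 2 (2*n+1) * (poch 2 2 (n-r) * poch 2 2 (n+1+r))⁻¹ := by
      rw [gbinv (n-r) (by omega), show 2*n+1-(n-r) = n+1+r from by omega]
    have hgb2 : gb (2*n+1) (n+1+r)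
        = poch 2 2 (2*n+1) * (poch 2 2 (n-r) * poch 2 2 (n+1+r))⁻¹ := by
      rw [gbinv (n+1+r) (by omega), show 2*n+1-(n+1+r) = n-r from by omega,
        mul_comm (poch 2 2 (n+1+r))]
    rw [e1, e2, hgb1, hgb2]
    have hAA : poch 2 2 (n-r) * poch 2 2 (n+1+r)
        = (poch 2 2 (n-r) * poch 4 2 (n+r)) * ((1-X)*(1+X)) := by
      rw [show n+1+r = (n+r)+1 from by omega, A_split]; ring
    have hinvAA : (poch 2 2 (n-r) * poch 2 2 (n+1+r))⁻¹
        = ((1-X)*(1+X):Q)⁻¹ * (poch 2 2 (n-r) * poch 4 2 (n+r))⁻¹ := by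
      rw [hAA, PowerSeries.mul_inv_rev]
    have huv : ((1-X)*(1+X):Q) * ((1-X)*(1+X):Q)⁻¹ = 1 := by
      apply PowerSeries.mul_inv_cancel
      rw [map_mul, map_sub, map_add, map_one, constantCoeff_X]
      norm_num
    rw [hinvAA, poch22_odd]
    linear_combination (alphaF2 r * (poch 2 2 (n-r) * poch 4 2 (n+r))⁻¹
        * (poch 2 2 n * poch 3 2 n) * Np (2*n+1)) * huv
      - ((1-X)*(1+X):Q)⁻¹ * (poch 2 2 (n-r) * poch 4 2 (n+r))⁻¹
        * (poch 2 2 n * poch 3 2 n) * Np (2*n+1) * (1-X) * (alpha_mul r)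
  rw [Finset.sum_congr rfl key] at star
  rw [← Finset.sum_mul, ← Finset.sum_mul] at star
  have := mul_right_cancel₀ (Np_ne_zero (2*n+1)) (star.trans (one_mul (Np (2*n+1))).symm)
  exact this
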